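/- Let k ≥ 3 and let n, m be positive integers. Then P(n;k) = C(m;k) if and only if (2(k-2)n + 4 - k)² = k(k-2)(2m-1)² + 2k. -/
import Mathlib


/-- The `n`-th `k`-gonal number: `P(n;k) = ((k-2)n² + (4-k)n)/2` (the numerator is always even). -/
def polygonal (k n : ℤ) : ℤ := ((k - 2) * n ^ 2 + (4 - k) * n) / 2

/-- The `m`-th centered `k`-gonal number: `C(m;k) = (km² - km + 2)/2` (the numerator is always even). -/
def centered (k m : ℤ) : ℤ := (k * m ^ 2 - k * m + 2) / 2

theorem polygonal_eq_centered_iff_pell (k n m : ℤ) (hk : 3 ≤ k) (hn : 1 ≤ n) (hm : 1 ≤ m) :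
    polygonal k n = centered k m ↔
      (2 * (k - 2) * n + 4 - k) ^ 2 = k * (k - 2) * (2 * m - 1) ^ 2 + 2 * k := by
  obtain ⟨c, hc⟩ := Int.even_mul_succ_self n
  obtain ⟨d, hd⟩ := Int.even_mul_succ_self m
  have ha : (k - 2) * n ^ 2 + (4 - k) * n = 2 * ((k - 2) * c + (3 - k) * n) := by
    linear_combination (k - 2) * hc
  have hb : k * m ^ 2 - k * m + 2 = 2 * (k * d - k * m + 1) := by
    linear_combination k * hd
  have hp : polygonal k n = (k - 2) * c + (3 - k) * n := by
    rw [polygonal, ha, Int.mul_ediv_cancel_left _ two_ne_zero]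
  have hq : centered k m = k * d - k * m + 1 := by
    rw [centered, hb, Int.mul_ediv_cancel_left _ two_ne_zero]
  rw [hp, hq]
  constructor
  · intro h
    linear_combination 8 * (k - 2) * h + (4 * (k - 2) ^ 2) * hc - 4 * (k - 2) * k * hd
  · intro h
    have h2 : k - 2 ≠ 0 := by omega
    have key : 8 * (k - 2) * (((k - 2) * c + (3 - k) * n) - (k * d - k * m + 1)) = 0 := by
      linear_combination h - (4 * (k - 2) ^ 2) * hc + 4 * (k - 2) * k * hd
    have := mul_eq_zero.mp key
    rcases this with h8 | h0
    · omega
    · linarith
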